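/- In a counting chain, the expected number of times the chain visits state k during the first n steps (i.e., E[#{i < n : X_i = k}]) equals P(X_n > k)/q_k. -/

import Mathlib

/-- `stepProb q n k` is the probability `P(X_n = k)` for the counting chain with
transition probabilities `q`: the chain starts at `X_0 = 0` and from state `k`
moves to `k+1` with probability `q k`, otherwise stays at `k`. -/
noncomputable def stepProb (q : ℕ → ℝ) : ℕ → ℕ → ℝ
  | 0, 0 => 1
  | 0, _ + 1 => 0
  | n + 1, 0 => (1 - q 0) * stepProb q n 0
  | n + 1, k + 1 => (1 - q (k + 1)) * stepProb q n (k + 1) + q k * stepProb q n k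

lemma stepProb_eq_zero (q : ℕ → ℝ) : ∀ n j, n < j → stepProb q n j = 0 := by
  intro n
  induction n with
  | zero =>
    intro j hj
    match j, hj with
    | m + 1, _ => rfl
  | succ n ih =>
    intro j hj
    match j, hj with
    | m + 1, hj =>
      have h1 : n < m + 1 := Nat.lt_of_succ_lt hj
      have h2 : n < m := Nat.lt_of_succ_lt_succ hj
      show (1 - q (m + 1)) * stepProb q n (m + 1) + q m * stepProb q n m = 0
      rw [ih _ h1, ih _ h2]; ring

lemma key (q : ℕ → ℝ) (n k : ℕ) :
    ∑ j ∈ Finset.Icc (k + 1) (n + 1), stepProb q (n + 1) j =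
      (∑ j ∈ Finset.Icc (k + 1) n, stepProb q n j) + q k * stepProb q n k := by
  by_cases hkn : k ≤ n
  · have himg : Finset.Icc (k + 1) (n + 1) =
        Finset.image (· + 1) (Finset.Icc k n) := by
      rw [Finset.image_add_right_Icc]
    have hinj : ∀ x ∈ Finset.Icc k n, ∀ y ∈ Finset.Icc k n,
        x + 1 = y + 1 → x = y := fun a _ b _ h => by omega
    rw [himg, Finset.sum_image hinj]
    have : ∑ m ∈ Finset.Icc k n, stepProb q (n + 1) (m + 1) =
        ∑ m ∈ Finset.Icc k n,
          ((1 - q (m + 1)) * stepProb q n (m + 1) + q m * stepProb q n m) := by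
      apply Finset.sum_congr rfl; intro m _; rfl
    rw [this]
    rw [Finset.sum_add_distrib]
    -- second sum: split off the k term
    have hsplit : Finset.Icc k n = insert k (Finset.Icc (k + 1) n) := by
      rw [Finset.Icc_add_one_left_eq_Ioc]
      exact (Finset.Ioc_insert_left hkn).symm
    have h2 : ∑ m ∈ Finset.Icc k n, q m * stepProb q n m =
        q k * stepProb q n k + ∑ m ∈ Finset.Icc (k + 1) n, q m * stepProb q n m := by
      rw [hsplit, Finset.sum_insert (by simp)]
    -- first sum: reindex back
    have h1 : ∑ m ∈ Finset.Icc k n, (1 - q (m + 1)) * stepProb q n (m + 1) =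
        ∑ j ∈ Finset.Icc (k + 1) (n + 1), (1 - q j) * stepProb q n j := by
      rw [himg, Finset.sum_image hinj]
    have h3 : ∑ j ∈ Finset.Icc (k + 1) (n + 1), (1 - q j) * stepProb q n j =
        ∑ j ∈ Finset.Icc (k + 1) n, (1 - q j) * stepProb q n j := by
      rw [Finset.sum_Icc_succ_top (by omega : k + 1 ≤ n + 1),
        stepProb_eq_zero q n (n + 1) (Nat.lt_succ_self n)]
      ring
    rw [h1, h3, h2]
    have hc : ∑ j ∈ Finset.Icc (k + 1) n, (1 - q j) * stepProb q n j +
        ∑ j ∈ Finset.Icc (k + 1) n, q j * stepProb q n j =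
        ∑ j ∈ Finset.Icc (k + 1) n, stepProb q n j := by
      rw [← Finset.sum_add_distrib]
      apply Finset.sum_congr rfl; intro j _; ring
    linarith
  · push_neg at hkn
    have h1 : Finset.Icc (k + 1) (n + 1) = ∅ := by
      apply Finset.Icc_eq_empty; omega
    have h2 : Finset.Icc (k + 1) n = ∅ := by
      apply Finset.Icc_eq_empty; omega
    rw [h1, h2, stepProb_eq_zero q n k hkn]
    simp

/-- The expected number of visits to state `k` during the first `n`
steps, `E[#{i < n : X_i = k}] = ∑_{i<n} P(X_i = k)`, equals `P(X_n > k) / q k`.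
Since `P(X_n = j) = 0` for `j > n`, `P(X_n > k) = ∑_{j = k+1}^{n} P(X_n = j)`. -/
theorem stmt_4 (q : ℕ → ℝ) (hq : ∀ k, 0 < q k ∧ q k ≤ 1) (n k : ℕ) :
    ∑ i ∈ Finset.range n, stepProb q i k =
      (∑ j ∈ Finset.Icc (k + 1) n, stepProb q n j) / q k := by
  have hqk : q k ≠ 0 := ne_of_gt (hq k).1
  induction n with
  | zero => simp
  | succ n ih =>
    rw [Finset.sum_range_succ, ih, key q n k]
    field_simp
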